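/- arXiv:1009.5033 — 5 statements merged into one kernel-verified Lean document; each statement's English description precedes it below -/
import Mathlib

section
/- For every integer j ≥ 0 and real z > 0, K_j(z) < K_{j+1}(z). -/
/-!
With `p = j - 1/2`, integration by parts against
`d/dλ (λ² - z²)^{p+1} = 2(p+1) λ (λ² - z²)^p` turns the integral defining `K_{j+1}` into
`(2j+1) ∫_z^∞ λ w(λ) dλ` with the positive weight `w(λ) = e^{-λ} (λ² - z²)^p`, and `2j+1` is
exactly the ratio of the normalising constants of `K_j` and `K_{j+1}`. So `z^{j+1} K_{j+1}(z)` and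
`z^{j+1} K_j(z)` are the same positive constant times `∫ λ w` and `∫ z w`, and `λ > z` there.
-/

open Real MeasureTheory

/-- The paper's modified Bessel function `K_j(z)`. -/
noncomputable def Kb (j : ℕ) (z : ℝ) : ℝ :=
  ((2 ^ j * Nat.factorial j : ℝ) / (Nat.factorial (2 * j) : ℝ)) * z ^ (-(j : ℤ)) *
    ∫ l in Set.Ioi z, Real.exp (-l) * (l ^ 2 - z ^ 2) ^ ((j : ℝ) - 1 / 2)

open Set Filter

lemma sq_sub_sq_pos {z l : ℝ} (hz : 0 < z) (hl : z < l) : 0 < l ^ 2 - z ^ 2 := by nlinarith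

lemma integrableOn_exp_neg_mul_mul_sq_sub_sq_rpow {z q b : ℝ} (hz : 0 < z) (hq : -1 < q)
    (hb : 0 < b) :
    IntegrableOn (fun l => exp (-(b * l)) * (l ^ 2 - z ^ 2) ^ q) (Ioi z) := by
  have hmeas : AEStronglyMeasurable (fun l => exp (-(b * l)) * (l ^ 2 - z ^ 2) ^ q)
      (volume.restrict (Ioi z)) := by
    refine ContinuousOn.aestronglyMeasurable ?_ measurableSet_Ioi
    exact ContinuousOn.mul (by fun_prop)
      (ContinuousOn.rpow_const (by fun_prop) fun l hl => Or.inl (sq_sub_sq_pos hz hl).ne')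
  rcases le_or_gt 0 q with hq0 | hq0
  · -- `(l² - z²)^q ≤ l^(2q)`, a Gamma-type integrand
    have hdom := (integrableOn_rpow_mul_exp_neg_mul_rpow (p := 1) (s := 2 * q) (by linarith)
      one_pos hb).mono_set (Ioi_subset_Ioi hz.le)
    refine hdom.mono' hmeas ?_
    filter_upwards [ae_restrict_mem measurableSet_Ioi] with l (hl : z < l)
    have hpos := sq_sub_sq_pos hz hl
    rw [norm_of_nonneg (by positivity), rpow_one, neg_mul, mul_comm, rpow_mul (by linarith),
      rpow_two]
    gcongr
    linarith [sq_nonneg z]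
  · -- `(l² - z²)^q ≤ (2z)^q (l - z)^q` and `e^{-bl} ≤ e^{-b(l-z)}`:
    -- a translated Gamma integrand
    have hgamma := integrableOn_rpow_mul_exp_neg_mul_rpow (p := 1) hq one_pos hb
    rw [← (measurePreserving_sub_right volume z).integrableOn_comp_preimage
      (measurableEmbedding_subRight z), preimage_sub_const_Ioi, zero_add] at hgamma
    refine (hgamma.const_mul ((2 * z) ^ q)).mono' hmeas ?_
    filter_upwards [ae_restrict_mem measurableSet_Ioi] with l (hl : z < l)
    have hpos := sq_sub_sq_pos hz hl
    rw [norm_of_nonneg (by positivity)]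
    simp only [Function.comp, rpow_one]
    have hsplit : l ^ 2 - z ^ 2 = (l - z) * (l + z) := by ring
    rw [hsplit, mul_rpow (by linarith) (by linarith)]
    have hexp : exp (-(b * l)) ≤ exp (-b * (l - z)) := exp_le_exp.2 (by nlinarith)
    have hpow : (l + z) ^ q ≤ (2 * z) ^ q :=
      rpow_le_rpow_of_nonpos (by positivity) (by linarith) hq0.le
    have : 0 ≤ (l - z) ^ q := rpow_nonneg (by linarith) q
    have : 0 ≤ (l + z) ^ q := rpow_nonneg (by linarith) q
    calc exp (-(b * l)) * ((l - z) ^ q * (l + z) ^ q)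
        ≤ exp (-b * (l - z)) * ((l - z) ^ q * (2 * z) ^ q) := by gcongr
      _ = (2 * z) ^ q * ((l - z) ^ q * exp (-b * (l - z))) := by ring

lemma integrableOn_id_mul_exp_neg_mul_sq_sub_sq_rpow {z q : ℝ} (hz : 0 < z) (hq : -1 < q) :
    IntegrableOn (fun l => l * (exp (-l) * (l ^ 2 - z ^ 2) ^ q)) (Ioi z) := by
  have hdom :=
    (integrableOn_exp_neg_mul_mul_sq_sub_sq_rpow hz hq (b := 1 / 2) (by norm_num)).const_mul 2
  have hint : IntegrableOn (fun l => exp (-l) * (l ^ 2 - z ^ 2) ^ q) (Ioi z) := by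
    simpa using integrableOn_exp_neg_mul_mul_sq_sub_sq_rpow hz hq one_pos
  refine hdom.mono' (aestronglyMeasurable_id.mul hint.aestronglyMeasurable) ?_
  filter_upwards [ae_restrict_mem measurableSet_Ioi] with l (hl : z < l)
  have : 0 ≤ (l ^ 2 - z ^ 2) ^ q := rpow_nonneg (sq_sub_sq_pos hz hl).le q
  -- `l e^{-l} ≤ 2 e^{-l/2}` since `l/2 + 1 ≤ e^{l/2}`
  have hweight : l * exp (-l) ≤ 2 * exp (-(1 / 2 * l)) := by
    have h1 := add_one_le_exp (l / 2)
    have h2 : exp (l / 2) * exp (-l) = exp (-(1 / 2 * l)) := by rw [← exp_add]; ring_nf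
    nlinarith [exp_pos (-l)]
  rw [norm_of_nonneg (mul_nonneg (hz.trans hl).le (by positivity)), ← mul_assoc, ← mul_assoc]
  gcongr

lemma integral_exp_neg_mul_sq_sub_sq_rpow_add_one {z p : ℝ} (hz : 0 < z) (hp : -1 < p) :
    ∫ l in Ioi z, exp (-l) * (l ^ 2 - z ^ 2) ^ (p + 1) =
      2 * (p + 1) * ∫ l in Ioi z, l * (exp (-l) * (l ^ 2 - z ^ 2) ^ p) := by
  set F : ℝ → ℝ := fun l => exp (-l) * (l ^ 2 - z ^ 2) ^ (p + 1)
  set G : ℝ → ℝ := fun l => l * (exp (-l) * (l ^ 2 - z ^ 2) ^ p)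
  have hF : IntegrableOn F (Ioi z) := by
    simpa using integrableOn_exp_neg_mul_mul_sq_sub_sq_rpow hz (q := p + 1) (by linarith) one_pos
  have hG : IntegrableOn G (Ioi z) := integrableOn_id_mul_exp_neg_mul_sq_sub_sq_rpow hz hp
  have hderiv : ∀ x ∈ Ioi z, HasDerivAt F (-F x + 2 * (p + 1) * G x) x := by
    intro x (hx : z < x)
    have hbase : HasDerivAt (fun l => l ^ 2 - z ^ 2) (2 * x) x := by
      simpa using (hasDerivAt_pow 2 x).sub_const (z ^ 2)
    refine ((hasDerivAt_neg x).exp.mul (hbase.rpow_const (p := p + 1)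
      (Or.inl (sq_sub_sq_pos hz hx).ne'))).congr_deriv ?_
    simp only [F, G, add_sub_cancel_right]
    ring
  have hF' : IntegrableOn (fun x => -F x + 2 * (p + 1) * G x) (Ioi z) := hF.neg.add (hG.const_mul _)
  have hcont : ContinuousWithinAt F (Ici z) z :=
    ((continuous_exp.comp continuous_neg).continuousAt.mul
      ((by fun_prop : ContinuousAt (fun l => l ^ 2 - z ^ 2) z).rpow_const
        (Or.inr (by linarith)))).continuousWithinAt
  have hFz : F z = 0 := by simp [F, zero_rpow (by linarith : p + 1 ≠ 0)]
  have hFTC := integral_Ioi_of_hasDerivAt_of_tendsto hcont hderiv hF'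
    (tendsto_zero_of_hasDerivAt_of_integrableOn_Ioi hderiv hF' hF)
  have hsplit := integral_add hF.neg (hG.const_mul (2 * (p + 1)))
  simp only [Pi.neg_apply, integral_neg, integral_const_mul] at hsplit
  linarith

lemma mul_setIntegral_Ioi_lt_setIntegral_id_mul {g : ℝ → ℝ} {z : ℝ}
    (hg : IntegrableOn g (Ioi z)) (hlg : IntegrableOn (fun l => l * g l) (Ioi z))
    (hpos : ∀ l ∈ Ioi z, 0 < g l) :
    z * ∫ l in Ioi z, g l < ∫ l in Ioi z, l * g l := by
  rw [← sub_pos, ← integral_const_mul, ← integral_sub hlg (hg.const_mul z)]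
  have hnonneg : 0 ≤ᵐ[volume.restrict (Ioi z)] fun l => l * g l - z * g l := by
    filter_upwards [ae_restrict_mem measurableSet_Ioi] with l (hl : z < l)
    show 0 ≤ l * g l - z * g l
    nlinarith [hpos l hl]
  rw [setIntegral_pos_iff_support_of_nonneg_ae hnonneg (hlg.sub (hg.const_mul z))]
  have hsupp : Ioi z ⊆ Function.support (fun l => l * g l - z * g l) ∩ Ioi z :=
    fun l (hl : z < l) => ⟨(show 0 < l * g l - z * g l by nlinarith [hpos l hl]).ne', hl⟩
  calc (0 : ENNReal) < volume (Ioi z) := by simp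
    _ ≤ _ := measure_mono hsupp

lemma factorial_ratio_succ_mul (j : ℕ) :
    (2 ^ (j + 1) * (j + 1).factorial : ℝ) / (2 * (j + 1)).factorial * (2 * j + 1) =
      (2 ^ j * j.factorial : ℝ) / (2 * j).factorial := by
  rw [show 2 * (j + 1) = 2 * j + 1 + 1 by ring, Nat.factorial_succ, Nat.factorial_succ,
    Nat.factorial_succ]
  push_cast
  field_simp
  ring

/-- Monotonicity in the order: `K_j(z) < K_{j+1}(z)` for `z > 0`. -/
theorem Kb_lt_succ (j : ℕ) (z : ℝ) (hz : 0 < z) : Kb j z < Kb (j + 1) z := by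
  set p : ℝ := (j : ℝ) - 1 / 2
  set c : ℝ := (2 ^ j * j.factorial : ℝ) / (2 * j).factorial
  have hp : -1 < p := by simp only [p]; linarith [(Nat.cast_nonneg j : (0 : ℝ) ≤ j)]
  have hIBP := integral_exp_neg_mul_sq_sub_sq_rpow_add_one hz hp
  have hlt := mul_setIntegral_Ioi_lt_setIntegral_id_mul
    (by simpa using integrableOn_exp_neg_mul_mul_sq_sub_sq_rpow hz hp one_pos)
    (integrableOn_id_mul_exp_neg_mul_sq_sub_sq_rpow hz hp)
    fun l (hl : z < l) => mul_pos (exp_pos _) (rpow_pos_of_pos (sq_sub_sq_pos hz hl) p)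
  have hKj : Kb j z =
      c * z ^ (-(j : ℤ)) * z⁻¹ * (z * ∫ l in Ioi z, exp (-l) * (l ^ 2 - z ^ 2) ^ p) := by
    simp only [Kb, c, p]
    field_simp
  have hKj1 : Kb (j + 1) z =
      c * z ^ (-(j : ℤ)) * z⁻¹ * ∫ l in Ioi z, l * (exp (-l) * (l ^ 2 - z ^ 2) ^ p) := by
    have hexp : ((j + 1 : ℕ) : ℝ) - 1 / 2 = p + 1 := by push_cast; ring
    have h2p : 2 * (p + 1) = 2 * j + 1 := by simp only [p]; ring
    rw [Kb, hexp, hIBP, h2p, show c = _ from (factorial_ratio_succ_mul j).symm, Nat.cast_succ,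
      neg_add, zpow_add₀ hz.ne', zpow_neg_one]
    ring
  rw [hKj, hKj1]
  gcongr
end

section
/- For every z > 0, | K_2(z) − 2/z² | ≤ 1 + z/3, where K_2(z) = z^{-2} ∫_z^∞ λ e^{-λ}(λ²−z²)^{1/2} dλ. -/
open Real MeasureTheory

/-- The paper's Bessel function `K_2(z) = z⁻² ∫_z^∞ λ e^{-λ}(λ²−z²)^{1/2} dλ`
(alternative integral representation). -/
noncomputable def K2 (z : ℝ) : ℝ :=
  z ^ (-2 : ℤ) * ∫ l in Set.Ioi z, l * Real.exp (-l) * Real.sqrt (l ^ 2 - z ^ 2)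

lemma integrableOn_sq_exp : IntegrableOn (fun x : ℝ => x ^ 2 * Real.exp (-x)) (Set.Ioi 0) := by
  have h := Real.GammaIntegral_convergent (s := 3) (by norm_num)
  refine h.congr_fun (fun x hx => ?_) measurableSet_Ioi
  beta_reduce
  rw [show (3:ℝ) - 1 = ((2:ℕ):ℝ) by norm_num, Real.rpow_natCast, mul_comm]

lemma integral_sq_exp : ∫ x in Set.Ioi (0:ℝ), x ^ 2 * Real.exp (-x) = 2 := by
  have h := Real.Gamma_eq_integral (s := 3) (by norm_num)
  have h2 : Real.Gamma 3 = 2 := by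
    rw [show (3:ℝ) = (2:ℕ) + 1 by norm_num, Real.Gamma_nat_eq_factorial]
    norm_num
  rw [show (2:ℝ) = Real.Gamma 3 from h2.symm, h]
  refine setIntegral_congr_fun measurableSet_Ioi (fun x hx => ?_)
  rw [show (3:ℝ) - 1 = ((2:ℕ):ℝ) by norm_num, Real.rpow_natCast, mul_comm]

/-- For all `z > 0`, `|K_2(z) − 2/z²| ≤ 1 + z/3`. -/
theorem K2_small_z_expansion (z : ℝ) (hz : 0 < z) :
    |K2 z - 2 / z ^ 2| ≤ 1 + z / 3 := by
  set f : ℝ → ℝ := fun l => l * Real.exp (-l) * Real.sqrt (l ^ 2 - z ^ 2) with hf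
  set g : ℝ → ℝ := fun l => l ^ 2 * Real.exp (-l) with hg
  -- pointwise facts on Ioi z
  have hsqrt_le : ∀ l : ℝ, l ∈ Set.Ioi z → Real.sqrt (l ^ 2 - z ^ 2) ≤ l := by
    intro l hl
    have hlz : z < l := hl
    have hl0 : 0 < l := hz.trans hlz
    calc Real.sqrt (l ^ 2 - z ^ 2) ≤ Real.sqrt (l ^ 2) :=
          Real.sqrt_le_sqrt (by nlinarith)
      _ = l := by rw [Real.sqrt_sq hl0.le]
  have hf_nonneg : ∀ l : ℝ, l ∈ Set.Ioi z → 0 ≤ f l := by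
    intro l hl
    have hl0 : 0 < l := hz.trans hl
    exact mul_nonneg (mul_nonneg hl0.le (Real.exp_pos _).le) (Real.sqrt_nonneg _)
  have hfg : ∀ l : ℝ, l ∈ Set.Ioi z → f l ≤ g l := by
    intro l hl
    have hl0 : 0 < l := hz.trans hl
    have := hsqrt_le l hl
    simp only [hf, hg]
    calc l * Real.exp (-l) * Real.sqrt (l ^ 2 - z ^ 2)
        ≤ l * Real.exp (-l) * l := by
          exact mul_le_mul_of_nonneg_left this (by positivity)
      _ = l ^ 2 * Real.exp (-l) := by ring
  have hdiff : ∀ l : ℝ, l ∈ Set.Ioi z → g l - f l ≤ z ^ 2 * Real.exp (-l) := by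
    intro l hl
    have hlz : z < l := hl
    have hl0 : 0 < l := hz.trans hlz
    have hs : Real.sqrt (l ^ 2 - z ^ 2) ^ 2 = l ^ 2 - z ^ 2 :=
      Real.sq_sqrt (by nlinarith)
    have hsl : Real.sqrt (l ^ 2 - z ^ 2) ≤ l := hsqrt_le l hl
    have hs0 : 0 ≤ Real.sqrt (l ^ 2 - z ^ 2) := Real.sqrt_nonneg _
    -- l^2 - l * sqrt ≤ z^2  ⟺  l^2 - z^2 ≤ l * sqrt
    have key : l ^ 2 - l * Real.sqrt (l ^ 2 - z ^ 2) ≤ z ^ 2 := by nlinarith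
    have hexp := (Real.exp_pos (-l)).le
    simp only [hf, hg]
    nlinarith [mul_le_mul_of_nonneg_right key hexp]
  -- integrabilities
  have hg_int0 : IntegrableOn g (Set.Ioi 0) := integrableOn_sq_exp
  have hg_int : IntegrableOn g (Set.Ioi z) :=
    hg_int0.mono_set (Set.Ioi_subset_Ioi hz.le)
  have hg_intc : IntegrableOn g (Set.Ioc 0 z) :=
    hg_int0.mono_set Set.Ioc_subset_Ioi_self
  have hf_meas : AEStronglyMeasurable f (volume.restrict (Set.Ioi z)) := by
    apply Continuous.aestronglyMeasurable
    continuity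
  have hf_int : IntegrableOn f (Set.Ioi z) := by
    refine Integrable.mono hg_int hf_meas ?_
    refine (ae_restrict_iff' measurableSet_Ioi).2 (ae_of_all _ fun l hl => ?_)
    have hl0 : 0 < l := hz.trans hl
    rw [Real.norm_eq_abs, Real.norm_eq_abs, abs_of_nonneg (hf_nonneg l hl),
      abs_of_nonneg (by positivity : (0:ℝ) ≤ g l)]
    exact hfg l hl
  -- splitting the integral of g
  have hsplit : (∫ x in Set.Ioi (0:ℝ), g x) =
      (∫ x in Set.Ioc 0 z, g x) + ∫ x in Set.Ioi z, g x := by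
    rw [← setIntegral_union (Set.Ioc_disjoint_Ioi le_rfl) measurableSet_Ioi hg_intc hg_int,
      Set.Ioc_union_Ioi_eq_Ioi hz.le]
  -- bound on the tail difference
  have hexp_int0 : IntegrableOn (fun l : ℝ => Real.exp (-l)) (Set.Ioi z) := by
    simpa using exp_neg_integrableOn_Ioi z one_pos
  have hexp_int : IntegrableOn (fun l : ℝ => z ^ 2 * Real.exp (-l)) (Set.Ioi z) :=
    hexp_int0.const_mul _
  have hA : |(∫ x in Set.Ioi z, f x) - ∫ x in Set.Ioi z, g x| ≤ z ^ 2 := by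
    rw [← integral_sub hf_int hg_int]
    calc |∫ x in Set.Ioi z, (f x - g x)| ≤ ∫ x in Set.Ioi z, |f x - g x| := by
          simpa [Real.norm_eq_abs] using
            norm_integral_le_integral_norm (μ := volume.restrict (Set.Ioi z))
              (fun x => f x - g x)
      _ ≤ ∫ x in Set.Ioi z, z ^ 2 * Real.exp (-x) := by
          refine setIntegral_mono_on ((hf_int.sub hg_int).abs) hexp_int
            measurableSet_Ioi (fun l hl => ?_)
          rw [abs_sub_comm, abs_of_nonneg (sub_nonneg.2 (hfg l hl))]
          exact hdiff l hl
      _ = z ^ 2 * Real.exp (-z) := by rw [integral_const_mul, integral_exp_neg_Ioi]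
      _ ≤ z ^ 2 * 1 := by
          exact mul_le_mul_of_nonneg_left (Real.exp_le_one_iff.2 (by linarith)) (by positivity)
      _ = z ^ 2 := mul_one _
  -- bound on the head
  have hB : (∫ x in Set.Ioc 0 z, g x) ≤ z ^ 3 / 3 := by
    have hsq_int : IntegrableOn (fun x : ℝ => x ^ 2) (Set.Ioc 0 z) :=
      (continuous_pow 2).integrableOn_Ioc
    calc (∫ x in Set.Ioc 0 z, g x) ≤ ∫ x in Set.Ioc 0 z, x ^ 2 := by
          refine setIntegral_mono_on hg_intc hsq_int measurableSet_Ioc (fun l hl => ?_)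
          simp only [hg]
          nlinarith [Real.exp_le_one_iff.2 (by linarith [hl.1] : -l ≤ 0), sq_nonneg l,
            (Real.exp_pos (-l)).le]
      _ = z ^ 3 / 3 := by
          rw [← intervalIntegral.integral_of_le hz.le, integral_pow]
          norm_num
  have hB0 : (0:ℝ) ≤ ∫ x in Set.Ioc 0 z, g x := by
    refine setIntegral_nonneg measurableSet_Ioc (fun l hl => ?_)
    simp only [hg]; positivity
  -- assemble
  have hzp : z ^ (-2 : ℤ) = (z ^ 2)⁻¹ := by
    rw [zpow_neg]
    norm_num
    try rfl
    try norm_cast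
  have hI2 : (∫ x in Set.Ioi z, f x) - 2 =
      ((∫ x in Set.Ioi z, f x) - ∫ x in Set.Ioi z, g x) - ∫ x in Set.Ioc 0 z, g x := by
    have : (2:ℝ) = ∫ x in Set.Ioi (0:ℝ), g x := integral_sq_exp.symm
    rw [this, hsplit]; ring
  have hK : K2 z - 2 / z ^ 2 = (z ^ 2)⁻¹ * ((∫ x in Set.Ioi z, f x) - 2) := by
    rw [K2, hzp]
    field_simp
    rfl
  rw [hK, abs_mul, abs_of_nonneg (by positivity : (0:ℝ) ≤ (z ^ 2)⁻¹)]
  have habs : |(∫ x in Set.Ioi z, f x) - 2| ≤ z ^ 2 + z ^ 3 / 3 := by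
    rw [hI2]
    calc |((∫ x in Set.Ioi z, f x) - ∫ x in Set.Ioi z, g x) - ∫ x in Set.Ioc 0 z, g x|
        ≤ |(∫ x in Set.Ioi z, f x) - ∫ x in Set.Ioi z, g x| + |∫ x in Set.Ioc 0 z, g x| :=
          abs_sub _ _
      _ ≤ z ^ 2 + z ^ 3 / 3 := by
          rw [abs_of_nonneg hB0]
          exact add_le_add hA hB
  calc (z ^ 2)⁻¹ * |(∫ x in Set.Ioi z, f x) - 2| ≤ (z ^ 2)⁻¹ * (z ^ 2 + z ^ 3 / 3) :=
        mul_le_mul_of_nonneg_left habs (by positivity)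
    _ = 1 + z / 3 := by field_simp
end

section
/- For 0 < z ≤ 1/10, the ratio of Bessel functions satisfies | K_1(z)/K_2(z) − z/2 | ≤ 2z². -/
/-!
Write `A = z K₁(z)` and `B = z² K₂(z)`, so that `K₁/K₂ − z/2 = z (2A − B) / (2B)`. For `0 ≤ z ≤ λ`
the elementary bounds `λ − z ≤ √(λ² − z²) ≤ λ` and `λ² − z² ≤ λ √(λ² − z²) ≤ λ²` reduce `A` and
`B` to the moments `∫_z^∞ λⁿ e^{-λ} dλ` (`n ≤ 2`), which gives
`e^{-z} ≤ A ≤ (z + 1) e^{-z}` and `(2z + 2) e^{-z} ≤ B ≤ (z² + 2z + 2) e^{-z}`.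
Hence `0 ≤ B − 2A ≤ z (z + 2) e^{-z} ≤ z B`, and `|K₁/K₂ − z/2| ≤ z²/2`.
-/

open Real MeasureTheory

/-- `K_1(z) = z⁻¹ ∫_z^∞ e^{-λ}(λ²−z²)^{1/2} dλ`. -/
noncomputable def K1 (z : ℝ) : ℝ :=
  z⁻¹ * ∫ l in Set.Ioi z, Real.exp (-l) * Real.sqrt (l ^ 2 - z ^ 2)

open Set Filter Topology

lemma setIntegral_mem_Icc_of_le_of_le {α : Type*} [MeasurableSpace α] {μ : Measure α}
    {s : Set α} {f g h : α → ℝ} (hs : MeasurableSet s) (hf : AEStronglyMeasurable f (μ.restrict s))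
    (hg : IntegrableOn g s μ) (hh : IntegrableOn h s μ) (hgf : ∀ x ∈ s, g x ≤ f x)
    (hfh : ∀ x ∈ s, f x ≤ h x) :
    ∫ x in s, f x ∂μ ∈ Icc (∫ x in s, g x ∂μ) (∫ x in s, h x ∂μ) := by
  have hf' : IntegrableOn f s μ := integrable_of_le_of_le hf (ae_restrict_of_forall_mem hs hgf)
    (ae_restrict_of_forall_mem hs hfh) hg hh
  exact ⟨setIntegral_mono_on hg hf' hs hgf, setIntegral_mono_on hf' hh hs hfh⟩

section ExpNegMoments

lemma hasDerivAt_neg_add_one_mul_exp_neg (x : ℝ) :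
    HasDerivAt (fun x ↦ -(x + 1) * exp (-x)) (x * exp (-x)) x :=
  (((hasDerivAt_id' x).add_const 1).fun_neg.mul (hasDerivAt_neg x).exp).congr_deriv (by ring)

lemma hasDerivAt_neg_sq_add_two_mul_add_two_mul_exp_neg (x : ℝ) :
    HasDerivAt (fun x ↦ -(x ^ 2 + 2 * x + 2) * exp (-x)) (x ^ 2 * exp (-x)) x :=
  (((((hasDerivAt_pow 2 x).fun_add ((hasDerivAt_id' x).const_mul 2)).add_const 2).fun_neg).mul
    (hasDerivAt_neg x).exp).congr_deriv (by ring)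

lemma tendsto_neg_add_one_mul_exp_neg :
    Tendsto (fun x ↦ -(x + 1) * exp (-x)) atTop (𝓝 0) := by
  have h := ((tendsto_pow_mul_exp_neg_atTop_nhds_zero 1).add
    (tendsto_pow_mul_exp_neg_atTop_nhds_zero 0)).neg
  simp only [add_zero, neg_zero] at h
  refine h.congr fun x ↦ ?_
  ring

lemma tendsto_neg_sq_add_two_mul_add_two_mul_exp_neg :
    Tendsto (fun x ↦ -(x ^ 2 + 2 * x + 2) * exp (-x)) atTop (𝓝 0) := by
  have h := ((tendsto_pow_mul_exp_neg_atTop_nhds_zero 2).add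
    (((tendsto_pow_mul_exp_neg_atTop_nhds_zero 1).const_mul 2).add
      ((tendsto_pow_mul_exp_neg_atTop_nhds_zero 0).const_mul 2))).neg
  simp only [mul_zero, add_zero, neg_zero] at h
  refine h.congr fun x ↦ ?_
  ring

variable {z : ℝ}

lemma mul_exp_neg_nonneg_of_mem_Ioi (hz : 0 ≤ z) {x : ℝ} (hx : x ∈ Ioi z) :
    0 ≤ x * exp (-x) :=
  mul_nonneg (hz.trans (le_of_lt hx)) (exp_pos _).le

lemma integrableOn_Ioi_mul_exp_neg (hz : 0 ≤ z) :
    IntegrableOn (fun x ↦ x * exp (-x)) (Ioi z) :=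
  integrableOn_Ioi_deriv_of_nonneg' (fun x _ ↦ hasDerivAt_neg_add_one_mul_exp_neg x)
    (fun _ hx ↦ mul_exp_neg_nonneg_of_mem_Ioi hz hx) tendsto_neg_add_one_mul_exp_neg

lemma integral_Ioi_mul_exp_neg (hz : 0 ≤ z) :
    ∫ x in Ioi z, x * exp (-x) = (z + 1) * exp (-z) := by
  rw [integral_Ioi_of_hasDerivAt_of_nonneg' (fun x _ ↦ hasDerivAt_neg_add_one_mul_exp_neg x)
    (fun _ hx ↦ mul_exp_neg_nonneg_of_mem_Ioi hz hx) tendsto_neg_add_one_mul_exp_neg]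
  ring

lemma integrableOn_Ioi_sq_mul_exp_neg (z : ℝ) :
    IntegrableOn (fun x ↦ x ^ 2 * exp (-x)) (Ioi z) :=
  integrableOn_Ioi_deriv_of_nonneg'
    (fun x _ ↦ hasDerivAt_neg_sq_add_two_mul_add_two_mul_exp_neg x)
    (fun _ _ ↦ by positivity) tendsto_neg_sq_add_two_mul_add_two_mul_exp_neg

lemma integral_Ioi_sq_mul_exp_neg (z : ℝ) :
    ∫ x in Ioi z, x ^ 2 * exp (-x) = (z ^ 2 + 2 * z + 2) * exp (-z) := by
  rw [integral_Ioi_of_hasDerivAt_of_nonneg'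
    (fun x _ ↦ hasDerivAt_neg_sq_add_two_mul_add_two_mul_exp_neg x)
    (fun _ _ ↦ by positivity) tendsto_neg_sq_add_two_mul_add_two_mul_exp_neg]
  ring

end ExpNegMoments

section SqrtSqSubSq

variable {l z : ℝ}

lemma sqrt_sq_sub_sq_le (hl : 0 ≤ l) : √(l ^ 2 - z ^ 2) ≤ l := by
  rw [sqrt_le_left hl]
  nlinarith [sq_nonneg z]

lemma sub_le_sqrt_sq_sub_sq (hz : 0 ≤ z) (hzl : z ≤ l) : l - z ≤ √(l ^ 2 - z ^ 2) :=
  le_sqrt_of_sq_le (by nlinarith)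

lemma sq_sub_sq_le_mul_sqrt_sq_sub_sq (hl : 0 ≤ l) : l ^ 2 - z ^ 2 ≤ l * √(l ^ 2 - z ^ 2) := by
  rcases le_total (l ^ 2 - z ^ 2) 0 with hneg | hpos
  · nlinarith [mul_nonneg hl (sqrt_nonneg (l ^ 2 - z ^ 2))]
  · calc l ^ 2 - z ^ 2 = √(l ^ 2 - z ^ 2) * √(l ^ 2 - z ^ 2) := (mul_self_sqrt hpos).symm
      _ ≤ l * √(l ^ 2 - z ^ 2) := by gcongr; exact sqrt_sq_sub_sq_le hl

end SqrtSqSubSq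

section BesselIntegrals

variable {z : ℝ}

lemma integral_exp_neg_mul_sqrt_mem_Icc (hz : 0 ≤ z) :
    ∫ l in Ioi z, exp (-l) * √(l ^ 2 - z ^ 2) ∈ Icc (exp (-z)) ((z + 1) * exp (-z)) := by
  have hlower : IntegrableOn (fun l ↦ l * exp (-l) - z * exp (-l)) (Ioi z) :=
    (integrableOn_Ioi_mul_exp_neg hz).sub ((integrableOn_exp_neg_Ioi z).const_mul z)
  have h := setIntegral_mem_Icc_of_le_of_le measurableSet_Ioi
    (by fun_prop : Continuous fun l ↦ exp (-l) * √(l ^ 2 - z ^ 2)).aestronglyMeasurable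
    hlower (integrableOn_Ioi_mul_exp_neg hz)
    (fun l hl ↦ by
      nlinarith [mul_le_mul_of_nonneg_left (sub_le_sqrt_sq_sub_sq hz (le_of_lt hl))
        (exp_pos (-l)).le])
    (fun l hl ↦ by
      nlinarith [mul_le_mul_of_nonneg_left (sqrt_sq_sub_sq_le (z := z) (hz.trans (le_of_lt hl)))
        (exp_pos (-l)).le])
  rwa [integral_sub (integrableOn_Ioi_mul_exp_neg hz) ((integrableOn_exp_neg_Ioi z).const_mul z),
    integral_const_mul, integral_Ioi_mul_exp_neg hz, integral_exp_neg_Ioi,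
    show (z + 1) * exp (-z) - z * exp (-z) = exp (-z) by ring] at h

lemma integral_mul_exp_neg_mul_sqrt_mem_Icc (hz : 0 ≤ z) :
    ∫ l in Ioi z, l * exp (-l) * √(l ^ 2 - z ^ 2) ∈
      Icc ((2 * z + 2) * exp (-z)) ((z ^ 2 + 2 * z + 2) * exp (-z)) := by
  have hlower : IntegrableOn (fun l ↦ l ^ 2 * exp (-l) - z ^ 2 * exp (-l)) (Ioi z) :=
    (integrableOn_Ioi_sq_mul_exp_neg z).sub ((integrableOn_exp_neg_Ioi z).const_mul (z ^ 2))
  have h := setIntegral_mem_Icc_of_le_of_le measurableSet_Ioi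
    (by fun_prop : Continuous fun l ↦ l * exp (-l) * √(l ^ 2 - z ^ 2)).aestronglyMeasurable
    hlower (integrableOn_Ioi_sq_mul_exp_neg z)
    (fun l hl ↦ by
      nlinarith [mul_le_mul_of_nonneg_left
        (sq_sub_sq_le_mul_sqrt_sq_sub_sq (z := z) (hz.trans (le_of_lt hl))) (exp_pos (-l)).le])
    (fun l hl ↦ by
      have hl0 : 0 ≤ l := hz.trans (le_of_lt hl)
      nlinarith [mul_le_mul_of_nonneg_left (sqrt_sq_sub_sq_le (z := z) hl0)
        (mul_nonneg hl0 (exp_pos (-l)).le)])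
  rwa [integral_sub (integrableOn_Ioi_sq_mul_exp_neg z)
    ((integrableOn_exp_neg_Ioi z).const_mul (z ^ 2)), integral_const_mul,
    integral_Ioi_sq_mul_exp_neg, integral_exp_neg_Ioi,
    show (z ^ 2 + 2 * z + 2) * exp (-z) - z ^ 2 * exp (-z) = (2 * z + 2) * exp (-z) by ring]
    at h

end BesselIntegrals

theorem ratio_small_z_general (z : ℝ) (hz : 0 < z) :
    |K1 z / K2 z - z / 2| ≤ 2 * z ^ 2 := by
  obtain ⟨hA_ge, hA_le⟩ := integral_exp_neg_mul_sqrt_mem_Icc hz.le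
  obtain ⟨hB_ge, hB_le⟩ := integral_mul_exp_neg_mul_sqrt_mem_Icc hz.le
  rw [K1, K2, zpow_neg, zpow_two]
  set A := ∫ l in Ioi z, exp (-l) * √(l ^ 2 - z ^ 2)
  set B := ∫ l in Ioi z, l * exp (-l) * √(l ^ 2 - z ^ 2)
  have hE := exp_pos (-z)
  have hB : 0 < B := by nlinarith
  have h2AB : |2 * A - B| ≤ z * B := abs_le.2 ⟨by nlinarith, by nlinarith⟩
  have hK : z⁻¹ * A / ((z * z)⁻¹ * B) - z / 2 = z * (2 * A - B) / (2 * B) := by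
    field_simp
  calc |z⁻¹ * A / ((z * z)⁻¹ * B) - z / 2| = z * |2 * A - B| / (2 * B) := by
        rw [hK, abs_div, abs_mul, abs_of_pos hz, abs_of_pos (by positivity : 0 < 2 * B)]
    _ ≤ z * (z * B) / (2 * B) := by gcongr
    _ = z ^ 2 / 2 := by field_simp
    _ ≤ 2 * z ^ 2 := by nlinarith [sq_nonneg z]

/-- For `0 < z ≤ 1/10`, `|K_1(z)/K_2(z) − z/2| ≤ 2z²`. -/
theorem ratio_small_z (z : ℝ) (hz : 0 < z) (hz' : z ≤ 1 / 10) :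
    |K1 z / K2 z - z / 2| ≤ 2 * z ^ 2 :=
  ratio_small_z_general z hz
end

section
/- For z ≥ 70 the expression z·G(z), with G(z) := 3·(K_1(z)/K_2(z)) + z·(K_1(z)/K_2(z))² − z − 4/z, satisfies z·G(z) < −1; in particular G(z) < 0. -/
open Real MeasureTheory

/-- `G(z) = 3 K_1/K_2 + z (K_1/K_2)² − z − 4/z`. -/
noncomputable def G (z : ℝ) : ℝ :=
  3 * (K1 z / K2 z) + z * (K1 z / K2 z) ^ 2 - z - 4 / z

/-!
Substituting `l = z + t` gives `K1 z = z⁻¹ e^{-z} P` and `K2 z = z⁻² e^{-z} (Q + z P)`, where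
`P = ∫₀^∞ e^{-t} √t √(t + 2z) dt` and `Q` is the same integral with an extra factor `t`.
Against the weight `e^{-t} √t` the mean of `t` is `Γ(5/2) / Γ(3/2) = 3/2`, and `√(t + 2z)` is
increasing in `t`, so Chebyshev's integral inequality gives `Q ≥ 3P/2`. Hence
`0 ≤ r := K1 z / K2 z ≤ z / (z + 3/2)`, and on that range
`z G(z) = 3zr + z²r² − z² − 4 ≤ −4 + (9/4) z² / (z + 3/2)² < −1`.
-/

open Set

section Chebyshev

variable {s : Set ℝ} {w f : ℝ → ℝ} {m : ℝ}

theorem setIntegral_sub_mul_mul_nonneg_of_monotone (hs : MeasurableSet s) (hf : Monotone f)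
    (hw : ∀ t ∈ s, 0 ≤ w t) (hwi : IntegrableOn (fun t ↦ (t - m) * w t) s)
    (hwfi : IntegrableOn (fun t ↦ (t - m) * w t * f t) s)
    (hmean : ∫ t in s, (t - m) * w t = 0) :
    0 ≤ ∫ t in s, (t - m) * w t * f t :=
  calc 0 ≤ ∫ t in s, (t - m) * w t * (f t - f m) := by
        refine setIntegral_nonneg hs fun t ht ↦ ?_
        rw [mul_right_comm]
        exact mul_nonneg ((monotone_id.monovary hf).sub_mul_sub_nonneg m t) (hw t ht)
    _ = (∫ t in s, (t - m) * w t * f t) - (∫ t in s, (t - m) * w t) * f m := by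
        rw [← integral_mul_const, ← integral_sub hwfi (hwi.mul_const _)]
        simp only [mul_sub]
    _ = ∫ t in s, (t - m) * w t * f t := by rw [hmean, zero_mul, sub_zero]

end Chebyshev

section Gamma

variable {s : ℝ}

theorem sub_mul_exp_neg_mul_rpow_eqOn :
    EqOn (fun t ↦ (t - s) * (exp (-t) * t ^ (s - 1)))
      (fun t ↦ exp (-t) * t ^ (s + 1 - 1) - s * (exp (-t) * t ^ (s - 1))) (Ioi 0) := by
  intro t (ht : 0 < t)
  simp only [add_sub_cancel_right, rpow_sub_one ht.ne']
  field_simp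

theorem integrableOn_sub_mul_exp_neg_mul_rpow (hs : 0 < s) :
    IntegrableOn (fun t ↦ (t - s) * (exp (-t) * t ^ (s - 1))) (Ioi 0) :=
  ((GammaIntegral_convergent (by linarith)).sub
    ((GammaIntegral_convergent hs).const_mul s)).congr_fun
      sub_mul_exp_neg_mul_rpow_eqOn.symm measurableSet_Ioi

theorem integral_sub_mul_exp_neg_mul_rpow (hs : 0 < s) :
    ∫ t in Ioi 0, (t - s) * (exp (-t) * t ^ (s - 1)) = 0 := by
  rw [setIntegral_congr_fun measurableSet_Ioi sub_mul_exp_neg_mul_rpow_eqOn,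
    integral_sub (GammaIntegral_convergent (by linarith))
      ((GammaIntegral_convergent hs).const_mul s),
    integral_const_mul, ← Gamma_eq_integral (by linarith), ← Gamma_eq_integral hs,
    Gamma_add_one hs.ne', sub_self]

theorem integrableOn_exp_neg_mul_pow (n : ℕ) :
    IntegrableOn (fun t ↦ exp (-t) * t ^ n) (Ioi 0) :=
  (GammaIntegral_convergent (s := n + 1) (by positivity)).congr_fun
    (fun t _ ↦ by simp only [add_sub_cancel_right, rpow_natCast]) measurableSet_Ioi

end Gamma

noncomputable def shiftedKernel (z t : ℝ) : ℝ :=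
  exp (-t) * (√t * √(t + 2 * z))

section ShiftedKernel

variable {z : ℝ}

theorem shiftedKernel_nonneg (z t : ℝ) : 0 ≤ shiftedKernel z t := by
  unfold shiftedKernel
  positivity

theorem shiftedKernel_le (hz : 0 ≤ z) {t : ℝ} (ht : 0 ≤ t) :
    shiftedKernel z t ≤ exp (-t) * (t + z) := by
  have hsqrt : √t * √(t + 2 * z) ≤ t + z := by
    rw [← sqrt_mul ht, sqrt_le_left (by positivity)]
    nlinarith [sq_nonneg z]
  exact mul_le_mul_of_nonneg_left hsqrt (exp_pos _).le

theorem continuous_shiftedKernel (z : ℝ) : Continuous (shiftedKernel z) := by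
  unfold shiftedKernel
  fun_prop

theorem integrableOn_shiftedKernel (hz : 0 ≤ z) : IntegrableOn (shiftedKernel z) (Ioi 0) := by
  refine Integrable.mono' ((integrableOn_exp_neg_mul_pow 1).add
    ((integrableOn_exp_neg_mul_pow 0).const_mul z))
    (continuous_shiftedKernel z).aestronglyMeasurable ?_
  filter_upwards [ae_restrict_mem measurableSet_Ioi] with t (ht : 0 < t)
  rw [norm_of_nonneg (shiftedKernel_nonneg z t)]
  refine (shiftedKernel_le hz ht.le).trans_eq ?_
  simp only [Pi.add_apply]
  ring

theorem integrableOn_mul_shiftedKernel (hz : 0 ≤ z) :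
    IntegrableOn (fun t ↦ t * shiftedKernel z t) (Ioi 0) := by
  refine Integrable.mono' ((integrableOn_exp_neg_mul_pow 2).add
    ((integrableOn_exp_neg_mul_pow 1).const_mul z))
    (continuous_id.mul (continuous_shiftedKernel z)).aestronglyMeasurable ?_
  filter_upwards [ae_restrict_mem measurableSet_Ioi] with t (ht : 0 < t)
  rw [norm_of_nonneg (mul_nonneg ht.le (shiftedKernel_nonneg z t))]
  refine (mul_le_mul_of_nonneg_left (shiftedKernel_le hz ht.le) ht.le).trans_eq ?_
  simp only [Pi.add_apply]
  ring

theorem three_halves_mul_integral_shiftedKernel_le (hz : 0 ≤ z) :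
    3 / 2 * ∫ t in Ioi 0, shiftedKernel z t ≤ ∫ t in Ioi 0, t * shiftedKernel z t := by
  have hrpow (t : ℝ) : t ^ ((3 : ℝ) / 2 - 1) = √t := by
    rw [sqrt_eq_rpow]; norm_num
  have hsplit : (fun t ↦ (t - 3 / 2) * (exp (-t) * t ^ ((3 : ℝ) / 2 - 1)) * √(t + 2 * z))
      = fun t ↦ t * shiftedKernel z t - 3 / 2 * shiftedKernel z t := by
    ext t
    rw [hrpow, shiftedKernel]
    ring
  have hcheb := setIntegral_sub_mul_mul_nonneg_of_monotone (f := fun t ↦ √(t + 2 * z))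
    measurableSet_Ioi (fun a b hab ↦ sqrt_le_sqrt (by linarith))
    (fun t _ ↦ by rw [hrpow]; positivity)
    (integrableOn_sub_mul_exp_neg_mul_rpow (s := 3 / 2) (by norm_num))
    (by rw [hsplit]
        exact (integrableOn_mul_shiftedKernel hz).sub ((integrableOn_shiftedKernel hz).const_mul _))
    (integral_sub_mul_exp_neg_mul_rpow (by norm_num))
  rw [hsplit, integral_sub (integrableOn_mul_shiftedKernel hz)
    ((integrableOn_shiftedKernel hz).const_mul _), integral_const_mul] at hcheb
  linarith

end ShiftedKernel

theorem setIntegral_Ioi_eq_setIntegral_Ioi_zero_comp_add (a : ℝ) (F : ℝ → ℝ) :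
    ∫ x in Ioi a, F x = ∫ t in Ioi 0, F (t + a) := by
  rw [← (measurePreserving_add_right volume a).setIntegral_preimage_emb
    (measurableEmbedding_addRight a), preimage_add_const_Ioi, sub_self]

section BesselRatio

variable {z : ℝ}

theorem exp_neg_mul_shiftedKernel {t : ℝ} (ht : 0 ≤ t) :
    exp (-z) * shiftedKernel z t = exp (-(t + z)) * √((t + z) ^ 2 - z ^ 2) := by
  rw [shiftedKernel, show (t + z) ^ 2 - z ^ 2 = t * (t + 2 * z) by ring, sqrt_mul ht, neg_add,
    exp_add]
  ring

theorem integral_exp_neg_mul_sqrt_sq_sub_sq (z : ℝ) :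
    ∫ l in Ioi z, exp (-l) * √(l ^ 2 - z ^ 2)
      = exp (-z) * ∫ t in Ioi 0, shiftedKernel z t := by
  rw [setIntegral_Ioi_eq_setIntegral_Ioi_zero_comp_add, ← integral_const_mul]
  exact setIntegral_congr_fun measurableSet_Ioi fun t (ht : 0 < t) ↦
    (exp_neg_mul_shiftedKernel ht.le).symm

theorem integral_mul_exp_neg_mul_sqrt_sq_sub_sq (hz : 0 ≤ z) :
    ∫ l in Ioi z, l * exp (-l) * √(l ^ 2 - z ^ 2)
      = exp (-z) * ((∫ t in Ioi 0, t * shiftedKernel z t)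
          + z * ∫ t in Ioi 0, shiftedKernel z t) := by
  rw [setIntegral_Ioi_eq_setIntegral_Ioi_zero_comp_add, ← integral_const_mul,
    ← integral_add (integrableOn_mul_shiftedKernel hz)
      ((integrableOn_shiftedKernel hz).const_mul z),
    ← integral_const_mul]
  refine setIntegral_congr_fun measurableSet_Ioi fun t (ht : 0 < t) ↦ ?_
  rw [mul_assoc, ← exp_neg_mul_shiftedKernel ht.le]
  ring

theorem K1_div_K2_eq (hz : 0 < z) :
    K1 z / K2 z = z * (∫ t in Ioi 0, shiftedKernel z t)
      / ((∫ t in Ioi 0, t * shiftedKernel z t) + z * ∫ t in Ioi 0, shiftedKernel z t) := by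
  rw [K1, K2, integral_exp_neg_mul_sqrt_sq_sub_sq, integral_mul_exp_neg_mul_sqrt_sq_sub_sq hz.le,
    zpow_neg, zpow_two]
  field_simp [(exp_pos (-z)).ne']

theorem K1_div_K2_mem_Icc (hz : 0 < z) : K1 z / K2 z ∈ Icc 0 (z / (z + 3 / 2)) := by
  rw [K1_div_K2_eq hz]
  set P := ∫ t in Ioi 0, shiftedKernel z t
  set Q := ∫ t in Ioi 0, t * shiftedKernel z t
  have hP : 0 ≤ P := setIntegral_nonneg measurableSet_Ioi fun t _ ↦ shiftedKernel_nonneg z t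
  have hQ : 3 / 2 * P ≤ Q := three_halves_mul_integral_shiftedKernel_le hz.le
  have hden : (z + 3 / 2) * P ≤ Q + z * P := by linarith
  have hden0 : 0 ≤ Q + z * P := (by positivity : 0 ≤ (z + 3 / 2) * P).trans hden
  refine ⟨by positivity, div_le_of_le_mul₀ hden0 (by positivity) ?_⟩
  calc z * P = z / (z + 3 / 2) * ((z + 3 / 2) * P) := by field_simp
    _ ≤ z / (z + 3 / 2) * (Q + z * P) := by gcongr

end BesselRatio

theorem mul_three_mul_add_mul_sq_sub_lt {z r : ℝ} (hz : 0 < z)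
    (hr : r ∈ Icc 0 (z / (z + 3 / 2))) :
    z * (3 * r + z * r ^ 2 - z - 4 / z) < -1 := by
  obtain ⟨hr0, hr1⟩ := hr
  rw [le_div_iff₀ (by positivity)] at hr1
  have hzr : z * r * (z + 3 / 2) ≤ z ^ 2 := by nlinarith
  have hquad : (z * r) ^ 2 + 3 * (z * r) < z ^ 2 + 3 := by
    nlinarith [mul_le_mul hzr hzr (by positivity) (by positivity)]
  calc z * (3 * r + z * r ^ 2 - z - 4 / z) = (z * r) ^ 2 + 3 * (z * r) - z ^ 2 - 4 := by
        field_simp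
        ring
    _ < -1 := by linarith

/-- For `z ≥ 70`, `z G(z) < −1`; in particular `G(z) < 0`. -/
theorem G_neg_large_z (z : ℝ) (hz : 70 ≤ z) :
    z * G z < -1 ∧ G z < 0 := by
  have hz0 : 0 < z := by linarith
  have hzG : z * G z < -1 := mul_three_mul_add_mul_sq_sub_lt hz0 (K1_div_K2_mem_Icc hz0)
  exact ⟨hzG, neg_of_mul_neg_right (by linarith) hz0.le⟩
end

section
/- Under the kinetic relations the Gibbs-type identity ρ + p = n (∂ρ/∂n)|_η holds: viewing ρ = m₀c²n K_1(z)/K_2(z) + 3 m₀c²n/z and η = η(n,z) determined by n = 4πe⁴m₀³c³h^{-3} e^{−η/k_B} (K_2(z)/z) exp(z K_1(z)/K_2(z)), one has ρ + p = n·( (∂ρ/∂n)|_z + (∂ρ/∂z)|_n · (∂z/∂n)|_η ), where (∂z/∂n)|_η is obtained by implicit differentiation of the constraint η = const. -/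
open Real

/-!
With `r = K₁/K₂`, the Bessel identities turn into the Riccati equation
`r' = r² + 3r/z - 1`. Both `∂ρ/∂z` and the logarithmic derivative of the entropy constraint
`C(z) = A (K₂/z) e^{z r}` are then multiples of the same factor `G = r' - 3/z²`:
`∂ρ/∂z = m₀c²n G` and `C'/C = z G`. Since `n = C`, the implicit derivative `(∂z/∂n)|_η = 1/C'`
contributes `n · m₀c²n G / (n z G) = m₀c²n/z = p`, while `n (∂ρ/∂n)|_z = ρ`.
-/

section BesselRatio

variable {K1 K2 : ℝ → ℝ} {dK1 dK2 z : ℝ}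

theorem hasDerivAt_bessel_ratio (hz : z ≠ 0) (hK2 : K2 z ≠ 0)
    (hd1 : HasDerivAt K1 dK1 z) (hd2 : HasDerivAt K2 dK2 z)
    (hid1 : z * dK1 = K1 z - z * K2 z) (hid2 : dK2 = -(2 / z) * K2 z - K1 z) :
    HasDerivAt (fun w => K1 w / K2 w) ((K1 z / K2 z) ^ 2 + 3 * (K1 z / K2 z) / z - 1) z := by
  have hdK1 : dK1 = K1 z / z - K2 z := by
    field_simp
    linarith
  refine (hd1.div hd2 hK2).congr_deriv ?_
  rw [hdK1, hid2]
  field_simp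
  ring

theorem hasDerivAt_energy_density (α : ℝ) (hz : z ≠ 0) (hK2 : K2 z ≠ 0)
    (hd1 : HasDerivAt K1 dK1 z) (hd2 : HasDerivAt K2 dK2 z)
    (hid1 : z * dK1 = K1 z - z * K2 z) (hid2 : dK2 = -(2 / z) * K2 z - K1 z) :
    HasDerivAt (fun w => α * (K1 w / K2 w) + 3 * α / w)
      (α * ((K1 z / K2 z) ^ 2 + 3 * (K1 z / K2 z) / z - 1 - 3 / z ^ 2)) z := by
  have hinv := (hasDerivAt_inv hz).const_mul (3 * α)
  simp only [← div_eq_mul_inv] at hinv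
  refine (((hasDerivAt_bessel_ratio hz hK2 hd1 hd2 hid1 hid2).const_mul α).add hinv).congr_deriv ?_
  ring

theorem hasDerivAt_entropy_constraint (A : ℝ) (hz : z ≠ 0) (hK2 : K2 z ≠ 0)
    (hd1 : HasDerivAt K1 dK1 z) (hd2 : HasDerivAt K2 dK2 z)
    (hid1 : z * dK1 = K1 z - z * K2 z) (hid2 : dK2 = -(2 / z) * K2 z - K1 z) :
    HasDerivAt (fun w => A * (K2 w / w) * exp (w * K1 w / K2 w))
      (A * (K2 z / z) * exp (z * K1 z / K2 z) *
        (z * ((K1 z / K2 z) ^ 2 + 3 * (K1 z / K2 z) / z - 1 - 3 / z ^ 2))) z := by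
  have hexponent : HasDerivAt (fun w => w * K1 w / K2 w)
      (K1 z / K2 z + z * ((K1 z / K2 z) ^ 2 + 3 * (K1 z / K2 z) / z - 1)) z := by
    simp only [mul_div_assoc]
    refine ((hasDerivAt_id' z).mul (hasDerivAt_bessel_ratio hz hK2 hd1 hd2 hid1 hid2)).congr_deriv ?_
    ring
  refine (((hd2.div (hasDerivAt_id' z) hz).const_mul A).mul hexponent.exp).congr_deriv ?_
  rw [hid2, Pi.div_apply]
  field_simp
  ring

end BesselRatio

/-- `dC` is `∂n/∂z` along `η = const`, so `1 / dC` is the implicit derivative `(∂z/∂n)|_η`. -/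
theorem gibbs_identity_general (K1 K2 : ℝ → ℝ) (m₀ c n z : ℝ)
    (hz : 0 < z) (hK2 : 0 < K2 z)
    (dK1 dK2 : ℝ)
    (hd1 : HasDerivAt K1 dK1 z) (hd2 : HasDerivAt K2 dK2 z)
    (hid1 : z * dK1 = K1 z - z * K2 z)
    (hid2 : dK2 = -(2 / z) * K2 z - K1 z)
    (A : ℝ)
    (hconstraint : n = A * (K2 z / z) * Real.exp (z * K1 z / K2 z))
    (Dρz dC : ℝ)
    (hDρz : HasDerivAt (fun w : ℝ =>
      m₀ * c ^ 2 * n * (K1 w / K2 w) + 3 * m₀ * c ^ 2 * n / w) Dρz z)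
    (hdC : HasDerivAt (fun w : ℝ =>
      A * (K2 w / w) * Real.exp (w * K1 w / K2 w)) dC z)
    (hdC0 : dC ≠ 0) :
    (m₀ * c ^ 2 * n * (K1 z / K2 z) + 3 * m₀ * c ^ 2 * n / z) + m₀ * c ^ 2 * n / z =
      n * ((m₀ * c ^ 2 * (K1 z / K2 z) + 3 * m₀ * c ^ 2 / z) + Dρz * (1 / dC)) := by
  set G := (K1 z / K2 z) ^ 2 + 3 * (K1 z / K2 z) / z - 1 - 3 / z ^ 2
  have hDρz_eq : Dρz = m₀ * c ^ 2 * n * G := by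
    exact hDρz.unique <| (hasDerivAt_energy_density (m₀ * c ^ 2 * n) hz.ne' hK2.ne' hd1 hd2
      hid1 hid2).congr_of_eventuallyEq (Filter.Eventually.of_forall fun w => by ring)
  have hdC_eq : dC = n * (z * G) := by
    rw [hconstraint]
    exact hdC.unique (hasDerivAt_entropy_constraint A hz.ne' hK2.ne' hd1 hd2 hid1 hid2)
  obtain ⟨hn, hzG⟩ := mul_ne_zero_iff.mp (hdC_eq ▸ hdC0)
  have hG : G ≠ 0 := right_ne_zero_of_mul hzG
  rw [hDρz_eq, hdC_eq]
  field_simp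

/-- The Gibbs-type identity `ρ + p = n (∂ρ/∂n)|_η` for the kinetic relations.
Here `K1, K2` are the modified Bessel functions, assumed (as hypotheses) to satisfy the
differential identities `z K_1'(z) = K_1(z) − z K_2(z)` and
`K_2'(z) = −(2/z) K_2(z) − K_1(z)`.  The energy density is
`ρ(n,z) = m₀c² n K_1(z)/K_2(z) + 3 m₀c² n / z`, the pressure is `p = m₀c² n / z`, and the
entropy constraint is `n = A (K_2(z)/z) exp(z K_1(z)/K_2(z))` with
`A = 4π e⁴ m₀³ c³ h⁻³ exp(−η/k_B)`; the derivative `(∂z/∂n)|_η` is obtained by implicit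
differentiation of this constraint, i.e. it equals `1/dC` where `dC` is the derivative of
the right-hand side with respect to `z`. -/
theorem gibbs_identity (K1 K2 : ℝ → ℝ) (m₀ c h kB η n z : ℝ)
    (hm : 0 < m₀) (hc : 0 < c) (hh : 0 < h) (hkB : 0 < kB)
    (hz : 0 < z) (hn : 0 < n) (hK2 : 0 < K2 z)
    (dK1 dK2 : ℝ)
    (hd1 : HasDerivAt K1 dK1 z) (hd2 : HasDerivAt K2 dK2 z)
    (hid1 : z * dK1 = K1 z - z * K2 z)
    (hid2 : dK2 = -(2 / z) * K2 z - K1 z)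
    (A : ℝ)
    (hA : A = 4 * π * Real.exp 4 * m₀ ^ 3 * c ^ 3 * h⁻¹ ^ 3 * Real.exp (-η / kB))
    (hconstraint : n = A * (K2 z / z) * Real.exp (z * K1 z / K2 z))
    (Dρz dC : ℝ)
    (hDρz : HasDerivAt (fun w : ℝ =>
      m₀ * c ^ 2 * n * (K1 w / K2 w) + 3 * m₀ * c ^ 2 * n / w) Dρz z)
    (hdC : HasDerivAt (fun w : ℝ =>
      A * (K2 w / w) * Real.exp (w * K1 w / K2 w)) dC z)
    (hdC0 : dC ≠ 0) :
    (m₀ * c ^ 2 * n * (K1 z / K2 z) + 3 * m₀ * c ^ 2 * n / z) + m₀ * c ^ 2 * n / z =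
      n * ((m₀ * c ^ 2 * (K1 z / K2 z) + 3 * m₀ * c ^ 2 / z) + Dρz * (1 / dC)) :=
  gibbs_identity_general K1 K2 m₀ c n z hz hK2 dK1 dK2 hd1 hd2 hid1 hid2 A hconstraint Dρz dC hDρz
    hdC hdC0
end
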